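/- Let n ≥ 2 be an integer and d > 1, and let p : (0,∞) × (0,∞) → [0,∞) be measurable with p(η,t) ≤ d g_n(η,t) for all η, t > 0 and ∫_0^∞ p(η,t) dη ≤ 1 for all t > 0. Then for every closed set F ⊆ ℝ, limsup_{t→∞} (1/t) · log ( ∫_{{η > 0 : η/t ∈ F}} p(η,t) dη ) ≤ −inf_{x ∈ F} I_1(x), where I_1(x) := (x−(n−1))²/4 for x ≥ 0 and I_1(x) := +∞ for x < 0. -/

import Mathlib

open MeasureTheory Real Filter

/-- The Davies–Mandouvalos comparison function `g_n(η,t)` for the radial density of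
hyperbolic Brownian motion on the `n`-dimensional Poincaré half-space. -/
noncomputable def hypg (n : ℕ) (η t : ℝ) : ℝ :=
  t ^ (-(n : ℝ) / 2) * (η / (1 + η)) ^ (n - 1) *
    Real.exp (-(η - ((n : ℝ) - 1) * t) ^ 2 / (4 * t)) *
    (1 + η + t) ^ (((n : ℝ) - 3) / 2) * (1 + η)

/-- The rate function `I₁` of the LDP for the radial component of hyperbolic Brownian
motion: `I₁(x) = (x-(n-1))²/4` for `x ≥ 0` and `I₁(x) = ∞` for `x < 0`. -/
noncomputable def I₁ (n : ℕ) (x : ℝ) : EReal :=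
  if 0 ≤ x then (((x - ((n : ℝ) - 1)) ^ 2 / 4 : ℝ) : EReal) else ⊤

open Topology
open scoped ENNReal

/-!
For `t ≥ 1` the Davies–Mandouvalos bound gives `p(η,t) ≤ d (1+η+t)^(n+1) exp(-t ρ(η/t))` with
`ρ(x) = (x-(n-1))²/4`. If `I ≤ ρ` on `F ∩ [0,∞)`, split `exp(-tρ) ≤ exp(-(1-ε)tI) exp(-ε t ρ)`,
absorb the polynomial factor into `exp(ε(η+t))` and complete the square: what is left is a
Gaussian in `η` of width `√t`, so the integral over `{η/t ∈ F}` is at most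
`C_ε √t exp((ε(n+1) - (1-ε)I) t)`. Hence the limsup is at most `ε(n+1) - (1-ε)I`; let `ε → 0`,
then `I ↑ inf_F I₁`.
-/

lemma hypg_le_pow_mul_exp (n : ℕ) {η t : ℝ} (hη : 0 < η) (ht : 1 ≤ t) :
    hypg n η t ≤ (1 + η + t) ^ (n + 1) * exp (-(η - ((n : ℝ) - 1) * t) ^ 2 / (4 * t)) := by
  have h_pow : t ^ (-(n : ℝ) / 2) ≤ 1 :=
    rpow_le_one_of_one_le_of_nonpos ht (by have := n.cast_nonneg (α := ℝ); linarith)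
  have h_ratio : (η / (1 + η)) ^ (n - 1) ≤ 1 :=
    pow_le_one₀ (by positivity) ((div_le_one (by linarith)).2 (by linarith))
  have h_rpow : (1 + η + t) ^ (((n : ℝ) - 3) / 2) ≤ (1 + η + t) ^ n := by
    rw [← rpow_natCast]
    exact rpow_le_rpow_of_exponent_le (by linarith) (by linarith)
  calc hypg n η t
      ≤ 1 * 1 * exp (-(η - ((n : ℝ) - 1) * t) ^ 2 / (4 * t)) * (1 + η + t) ^ n * (1 + η + t) := by
        have h_lin : 1 + η ≤ 1 + η + t := by linarith
        unfold hypg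
        gcongr
    _ = _ := by ring

lemma one_add_pow_le_mul_exp (k : ℕ) {M x : ℝ} (hM : 1 ≤ M) (hx : 0 ≤ 1 + x) :
    (1 + x) ^ k ≤ M ^ k * exp (k * x / M) := by
  have h_base : 1 + x ≤ M * exp (x / M) := by
    have := add_one_le_exp (x / M)
    calc 1 + x ≤ M + x := by linarith
      _ = M * (x / M + 1) := by field_simp; ring
      _ ≤ M * exp (x / M) := by gcongr
  calc (1 + x) ^ k ≤ (M * exp (x / M)) ^ k := by gcongr
    _ = M ^ k * exp (k * x / M) := by rw [mul_pow, ← exp_nat_mul, mul_div_assoc]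

lemma lintegral_ofReal_exp_neg_mul_sub_sq {c : ℝ} (hc : 0 < c) (m : ℝ) :
    ∫⁻ x, ENNReal.ofReal (exp (-c * (x - m) ^ 2)) = ENNReal.ofReal (√(π / c)) := by
  rw [← ofReal_integral_eq_lintegral_ofReal
      ((integrable_exp_neg_mul_sq hc).comp_sub_right m) (ae_of_all _ fun x => (exp_pos _).le),
    integral_sub_right_eq_self (fun x => exp (-c * x ^ 2)) m, integral_gaussian]

lemma tendsto_inv_mul_log_mul_sqrt_mul_exp {C : ℝ} (hC : 0 < C) (β : ℝ) :
    Tendsto (fun t => t⁻¹ * log (C * √t * exp (β * t))) atTop (𝓝 β) := by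
  have h_lim : Tendsto (fun t => log C * t⁻¹ + (log t / t) / 2 + β) atTop
      (𝓝 (log C * 0 + 0 / 2 + β)) :=
    ((tendsto_inv_atTop_zero.const_mul _).add
      (isLittleO_log_id_atTop.tendsto_div_nhds_zero.div_const 2)).add_const β
  rw [mul_zero, zero_div, zero_add, zero_add] at h_lim
  refine h_lim.congr' ?_
  filter_upwards [eventually_gt_atTop 0] with t ht
  rw [log_mul (by positivity) (exp_pos _).ne', log_mul hC.ne' (by positivity), log_exp,
    log_sqrt ht.le]
  field_simp

lemma hypg_le_gaussian (n : ℕ) {η t ε I : ℝ} (hη : 0 < η) (ht : 1 ≤ t) (hε : 0 < ε)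
    (hε1 : ε ≤ 1) (hI : I ≤ (η / t - ((n : ℝ) - 1)) ^ 2 / 4) :
    hypg n η t ≤ ((n + 1) / ε) ^ (n + 1) * exp ((ε * (n + 1) - (1 - ε) * I) * t) *
      exp (-(ε / (4 * t)) * (η - (n + 1) * t) ^ 2) := by
  set M : ℝ := (n + 1) / ε with hM_def
  have hM : 1 ≤ M := (le_div_iff₀ hε).2 (by linarith [n.cast_nonneg (α := ℝ)])
  have ht0 : 0 < t := by linarith
  have h_exponent : ((n + 1 : ℕ) : ℝ) * (η + t) / M + -(η - ((n : ℝ) - 1) * t) ^ 2 / (4 * t) ≤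
      (ε * (n + 1) - (1 - ε) * I) * t + -(ε / (4 * t)) * (η - (n + 1) * t) ^ 2 := by
    have h_rate : t * I ≤ (η - ((n : ℝ) - 1) * t) ^ 2 / (4 * t) := by
      calc t * I ≤ t * ((η / t - ((n : ℝ) - 1)) ^ 2 / 4) := by gcongr
        _ = _ := by field_simp
    have h_complete_square : ε * (η + t) - ε * ((η - ((n : ℝ) - 1) * t) ^ 2 / (4 * t)) =
        ε * (n + 1) * t - ε / (4 * t) * (η - (n + 1) * t) ^ 2 := by
      field_simp; ring
    have h_M : ((n + 1 : ℕ) : ℝ) * (η + t) / M = ε * (η + t) := by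
      rw [hM_def]; push_cast; field_simp
    rw [h_M]
    linear_combination h_complete_square + mul_le_mul_of_nonneg_left h_rate (sub_nonneg.2 hε1)
  calc hypg n η t
      ≤ (1 + (η + t)) ^ (n + 1) * exp (-(η - ((n : ℝ) - 1) * t) ^ 2 / (4 * t)) := by
        rw [← add_assoc]; exact hypg_le_pow_mul_exp n hη ht
    _ ≤ M ^ (n + 1) * exp (((n + 1 : ℕ) : ℝ) * (η + t) / M) *
          exp (-(η - ((n : ℝ) - 1) * t) ^ 2 / (4 * t)) := by
        gcongr; exact one_add_pow_le_mul_exp _ hM (by linarith)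
    _ ≤ M ^ (n + 1) * exp ((ε * (n + 1) - (1 - ε) * I) * t +
          -(ε / (4 * t)) * (η - (n + 1) * t) ^ 2) := by
        rw [mul_assoc, ← exp_add]; gcongr
    _ = _ := by rw [exp_add, mul_assoc]

lemma setLIntegral_le_of_le_hypg (n : ℕ) {d t ε I : ℝ} (hd : 0 ≤ d) (ht : 1 ≤ t)
    (hε : 0 < ε) (hε1 : ε ≤ 1) {f : ℝ → ℝ} {S : Set ℝ}
    (hS : ∀ η ∈ S, 0 < η ∧ I ≤ (η / t - ((n : ℝ) - 1)) ^ 2 / 4)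
    (hf : ∀ η ∈ S, f η ≤ d * hypg n η t) :
    ∫⁻ η in S, ENNReal.ofReal (f η) ≤ ENNReal.ofReal (d * ((n + 1) / ε) ^ (n + 1) *
      √(4 * π / ε) * √t * exp ((ε * (n + 1) - (1 - ε) * I) * t)) := by
  have ht0 : 0 < t := by linarith
  set K : ℝ := d * ((n + 1) / ε) ^ (n + 1) * exp ((ε * (n + 1) - (1 - ε) * I) * t) with hK_def
  have hK : 0 ≤ K := by positivity
  have hc : 0 < ε / (4 * t) := by positivity
  have h_gauss : ∀ η ∈ S, f η ≤ K * exp (-(ε / (4 * t)) * (η - (n + 1) * t) ^ 2) :=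
    fun η hη => calc
      f η ≤ d * hypg n η t := hf η hη
      _ ≤ d * (((n + 1) / ε) ^ (n + 1) * exp ((ε * (n + 1) - (1 - ε) * I) * t) *
          exp (-(ε / (4 * t)) * (η - (n + 1) * t) ^ 2)) := by
        gcongr; exact hypg_le_gaussian n (hS η hη).1 ht hε hε1 (hS η hη).2
      _ = _ := by rw [hK_def]; ring
  calc ∫⁻ η in S, ENNReal.ofReal (f η)
      ≤ ∫⁻ η in S, ENNReal.ofReal (K * exp (-(ε / (4 * t)) * (η - (n + 1) * t) ^ 2)) :=
        setLIntegral_mono (by fun_prop) fun η hη => ENNReal.ofReal_le_ofReal (h_gauss η hη)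
    _ ≤ ∫⁻ η, ENNReal.ofReal (K * exp (-(ε / (4 * t)) * (η - (n + 1) * t) ^ 2)) :=
        setLIntegral_le_lintegral _ _
    _ = ENNReal.ofReal K * ENNReal.ofReal (√(π / (ε / (4 * t)))) := by
        simp_rw [ENNReal.ofReal_mul hK]
        rw [lintegral_const_mul' _ _ ENNReal.ofReal_ne_top,
          lintegral_ofReal_exp_neg_mul_sub_sq hc]
    _ = _ := by
        rw [← ENNReal.ofReal_mul hK, show π / (ε / (4 * t)) = 4 * π / ε * t by field_simp,
          sqrt_mul (by positivity), hK_def]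
        ring_nf

lemma limsup_inv_mul_log_le {f : ℝ → ℝ≥0∞} {C β : ℝ} (hC : 0 < C)
    (hf : ∀ᶠ t in atTop, f t ≤ ENNReal.ofReal (C * √t * exp (β * t))) :
    limsup (fun t : ℝ => ((t⁻¹ : ℝ) : EReal) * ENNReal.log (f t)) atTop ≤ β := by
  rw [← (EReal.tendsto_coe.2 (tendsto_inv_mul_log_mul_sqrt_mul_exp hC β)).limsup_eq]
  refine limsup_le_limsup ?_
  filter_upwards [hf, eventually_gt_atTop 0] with t hft ht
  rw [EReal.coe_mul, ← ENNReal.log_ofReal_of_pos (by positivity)]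
  exact mul_le_mul_of_nonneg_left (ENNReal.log_le_log hft) (by exact_mod_cast (inv_pos.2 ht).le)

lemma limsup_le_neg_of_le_rate (n : ℕ) {d I : ℝ} (hd : 0 < d) {p : ℝ → ℝ → ℝ}
    (hp_le : ∀ η t : ℝ, 0 < η → 0 < t → p η t ≤ d * hypg n η t) {S : ℝ → Set ℝ}
    (hS : ∀ t, 1 ≤ t → ∀ η ∈ S t, 0 < η ∧ I ≤ (η / t - ((n : ℝ) - 1)) ^ 2 / 4) :
    limsup (fun t : ℝ => ((t⁻¹ : ℝ) : EReal) *
      ENNReal.log (∫⁻ η in S t, ENNReal.ofReal (p η t))) atTop ≤ ((-I : ℝ) : EReal) := by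
  have h_eps : ∀ ε ∈ Set.Ioo (0 : ℝ) 1, limsup (fun t : ℝ => ((t⁻¹ : ℝ) : EReal) *
      ENNReal.log (∫⁻ η in S t, ENNReal.ofReal (p η t))) atTop ≤
      ((ε * (n + 1) - (1 - ε) * I : ℝ) : EReal) := fun ε ⟨hε, hε1⟩ =>
    limsup_inv_mul_log_le (C := d * ((n + 1) / ε) ^ (n + 1) * √(4 * π / ε)) (by positivity) <| by
      filter_upwards [eventually_ge_atTop 1] with t ht
      exact setLIntegral_le_of_le_hypg n hd.le ht hε hε1.le (hS t ht)
        fun η hη => hp_le η t (hS t ht η hη).1 (by linarith)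
  have h_lim : Tendsto (fun ε : ℝ => ε * (n + 1) - (1 - ε) * I) (𝓝[>] 0) (𝓝 (-I)) := by
    have := ((by fun_prop : Continuous fun ε : ℝ => ε * (n + 1) - (1 - ε) * I).tendsto 0)
    simpa using this.mono_left nhdsWithin_le_nhds
  exact ge_of_tendsto (EReal.tendsto_coe.2 h_lim)
    (eventually_of_mem (Ioo_mem_nhdsGT one_pos) h_eps)

theorem ldp_upper_bound_general (n : ℕ) (d : ℝ) (hd : 1 < d)
    (p : ℝ → ℝ → ℝ)
    (hp_le : ∀ η t : ℝ, 0 < η → 0 < t → p η t ≤ d * hypg n η t)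
    (F : Set ℝ) :
    Filter.limsup
        (fun t : ℝ => ((t⁻¹ : ℝ) : EReal) *
          ENNReal.log (∫⁻ η in {η : ℝ | 0 < η ∧ η / t ∈ F}, ENNReal.ofReal (p η t)))
        Filter.atTop ≤
      -(⨅ x ∈ F, I₁ n x) := by
  refine EReal.le_neg_of_le_neg (EReal.ge_of_forall_gt_iff_ge.1 fun I hI => ?_)
  have h_rate : ∀ x ∈ F, 0 ≤ x → I ≤ (x - ((n : ℝ) - 1)) ^ 2 / 4 := fun x hx hx0 => by
    have := hI.trans_le (iInf₂_le x hx)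
    rw [I₁, if_pos hx0] at this
    exact_mod_cast this.le
  have h_limsup := limsup_le_neg_of_le_rate n (by linarith) hp_le
    (S := fun t => {η | 0 < η ∧ η / t ∈ F}) fun t ht η hη =>
    ⟨hη.1, h_rate _ hη.2 (div_pos hη.1 (by linarith)).le⟩
  rw [EReal.coe_neg] at h_limsup
  exact EReal.le_neg_of_le_neg h_limsup

/-- Large deviation upper bound for closed sets for the radial component of hyperbolic
Brownian motion: for every closed `F`,
`limsup_{t→∞} (1/t) log P(D_n(t)/t ∈ F) ≤ -inf_{x ∈ F} I₁(x)`. -/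
theorem ldp_upper_bound (n : ℕ) (hn : 2 ≤ n) (d : ℝ) (hd : 1 < d)
    (p : ℝ → ℝ → ℝ) (hp : Measurable (Function.uncurry p))
    (hp_nonneg : ∀ η t : ℝ, 0 < η → 0 < t → 0 ≤ p η t)
    (hp_le : ∀ η t : ℝ, 0 < η → 0 < t → p η t ≤ d * hypg n η t)
    (hp_prob : ∀ t : ℝ, 0 < t → ∫⁻ η in Set.Ioi (0 : ℝ), ENNReal.ofReal (p η t) ≤ 1)
    (F : Set ℝ) (hF : IsClosed F) :
    Filter.limsup
        (fun t : ℝ => ((t⁻¹ : ℝ) : EReal) *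
          ENNReal.log (∫⁻ η in {η : ℝ | 0 < η ∧ η / t ∈ F}, ENNReal.ofReal (p η t)))
        Filter.atTop ≤
      -(⨅ x ∈ F, I₁ n x) :=
  ldp_upper_bound_general n d hd p hp_le F
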